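/- Under the hypotheses of the preceding statement, the minimizer of the posterior expected loss Λ over {(ℓ, u) : ℓ ≤ u} is unique: for all reals ℓ ≤ u with (ℓ, u) ≠ (x̄ - t s/√n, x̄ + t s/√n), one has Λ(ℓ, u) > Λ(x̄ - t s/√n, x̄ + t s/√n). -/

import Mathlib

/-! Standardizing by `z = √n (x - x̄) / s` turns the loss into `Λ(ℓ, u) = k (G(z u) - G(z ℓ))`
with `G(z) = f(t) z - F(z)`, where `f`, `F` are the t density and cdf. As `f` is strictly
decreasing in `z²`, `G' = f(t) - f` is negative on `(-t, t)` and positive outside `[-t, t]`, so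
`G` rises, falls on `[-t, t]` and rises again; for such a function the increment `G b - G a`
over `a ≤ b` is smallest exactly at `(a, b) = (-t, t)`. -/

open MeasureTheory

/-- Student t pdf with `m` degrees of freedom. -/
noncomputable def tPdf (m : ℕ) (x : ℝ) : ℝ :=
  (Real.Gamma (((m : ℝ) + 1) / 2) / (Real.sqrt ((m : ℝ) * Real.pi) * Real.Gamma ((m : ℝ) / 2))) *
    (1 + x ^ 2 / (m : ℝ)) ^ (-(((m : ℝ) + 1) / 2))

/-- Student t cdf with `m` degrees of freedom. -/
noncomputable def tCdf (m : ℕ) (x : ℝ) : ℝ :=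
  ∫ u in Set.Iic x, tPdf m u

open Set

theorem sub_lt_sub_of_strictMonoOn_of_strictAntiOn {F : ℝ → ℝ} {a b c d : ℝ} (hcd : c < d)
    (hleft : StrictMonoOn F (Iic c)) (hmid : StrictAntiOn F (Icc c d))
    (hright : StrictMonoOn F (Ici d)) (hab : a ≤ b) (hne : (a, b) ≠ (c, d)) :
    F d - F c < F b - F a := by
  have hdc : F d < F c := hmid ⟨le_rfl, hcd.le⟩ ⟨hcd.le, le_rfl⟩ hcd
  have hmin : ∀ x, c ≤ x → x ≠ d → F d < F x := fun x hcx hxd ↦ by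
    rcases hxd.lt_or_gt with hxd | hdx
    · exact hmid ⟨hcx, hxd.le⟩ ⟨hcd.le, le_rfl⟩ hxd
    · exact hright self_mem_Ici hdx.le hdx
  have hmax : ∀ x, x ≤ d → x ≠ c → F x < F c := fun x hxd hxc ↦ by
    rcases hxc.lt_or_gt with hxc | hcx
    · exact hleft hxc.le self_mem_Iic hxc
    · exact hmid ⟨le_rfl, hcd.le⟩ ⟨hcx.le, hxd⟩ hcx
  rcases lt_or_ge b c with hbc | hcb
  · linarith [hleft.monotoneOn (hab.trans hbc.le) hbc.le hab]
  rcases lt_or_ge d a with hda | had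
  · linarith [hright.monotoneOn hda.le (hda.le.trans hab) hab]
  by_cases hac : a = c
  · subst hac
    have hbd : b ≠ d := fun hbd ↦ hne (by rw [hbd])
    linarith [hmin b hcb hbd]
  · have hFb : F d ≤ F b := by
      rcases eq_or_ne b d with rfl | hbd
      · exact le_rfl
      · exact (hmin b hcb hbd).le
    linarith [hmax a had hac]

section
variable {m : ℕ}

theorem tPdf_pos (hm : 0 < m) (x : ℝ) : 0 < tPdf m x := by
  have hm' : (0 : ℝ) < m := by exact_mod_cast hm
  unfold tPdf
  have := Real.Gamma_pos_of_pos (by positivity : (0 : ℝ) < ((m : ℝ) + 1) / 2)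
  have := Real.Gamma_pos_of_pos (by positivity : (0 : ℝ) < (m : ℝ) / 2)
  positivity

theorem continuous_tPdf (hm : 0 < m) : Continuous (tPdf m) := by
  have hm' : (0 : ℝ) < m := by exact_mod_cast hm
  exact continuous_const.mul <| (by fun_prop : Continuous fun x : ℝ ↦ 1 + x ^ 2 / m).rpow_const
    fun x ↦ Or.inl (by positivity)

theorem tPdf_lt_tPdf_of_sq_lt (hm : 0 < m) {x y : ℝ} (h : x ^ 2 < y ^ 2) :
    tPdf m y < tPdf m x := by
  have hm' : (0 : ℝ) < m := by exact_mod_cast hm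
  have := Real.Gamma_pos_of_pos (by positivity : (0 : ℝ) < ((m : ℝ) + 1) / 2)
  have := Real.Gamma_pos_of_pos (by positivity : (0 : ℝ) < (m : ℝ) / 2)
  unfold tPdf
  refine mul_lt_mul_of_pos_left ?_ (by positivity)
  exact Real.rpow_lt_rpow_of_neg (by positivity) (by gcongr) (by linarith)

theorem integrable_tPdf (hm : 0 < m) : Integrable (tPdf m) := by
  have hm' : (0 : ℝ) < m := by exact_mod_cast hm
  have hg : Integrable fun y : ℝ ↦ ((1 : ℝ) + ‖y‖ ^ 2) ^ (-((m : ℝ) + 1) / 2) :=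
    integrable_rpow_neg_one_add_norm_sq (by simp [hm'])
  convert (hg.comp_div (Real.sqrt_pos.2 hm').ne').const_mul _ using 1
  funext x
  simp only [tPdf, Real.norm_eq_abs, sq_abs, div_pow, Real.sq_sqrt hm'.le, neg_div]
  rfl

theorem hasDerivAt_tCdf (hm : 0 < m) (x : ℝ) : HasDerivAt (tCdf m) (tPdf m x) x := by
  have hIic : ∀ y, IntegrableOn (tPdf m) (Iic y) := fun _ ↦ (integrable_tPdf hm).integrableOn
  have h : tCdf m = fun y ↦ tCdf m 0 + ∫ u in (0 : ℝ)..y, tPdf m u := by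
    funext y
    rw [← intervalIntegral.integral_Iic_sub_Iic (hIic 0) (hIic y), tCdf, tCdf, add_sub_cancel]
  rw [h]
  exact ((continuous_tPdf hm).integral_hasStrictDerivAt 0 x).hasDerivAt.const_add _

noncomputable def tLossPotential (m : ℕ) (t x : ℝ) : ℝ := tPdf m t * x - tCdf m x

theorem hasDerivAt_tLossPotential (hm : 0 < m) (t x : ℝ) :
    HasDerivAt (tLossPotential m t) (tPdf m t - tPdf m x) x :=
  ((hasDerivAt_id x).const_mul _).sub (hasDerivAt_tCdf hm x) |>.congr_deriv (by simp)

theorem tLossPotential_sub_lt (hm : 0 < m) {t a b : ℝ} (ht : 0 < t) (hab : a ≤ b)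
    (hne : (a, b) ≠ (-t, t)) :
    tLossPotential m t t - tLossPotential m t (-t) <
      tLossPotential m t b - tLossPotential m t a := by
  have hderiv : ∀ x, deriv (tLossPotential m t) x = tPdf m t - tPdf m x :=
    fun x ↦ (hasDerivAt_tLossPotential hm t x).deriv
  have hcont : Continuous (tLossPotential m t) := continuous_iff_continuousAt.2
    fun x ↦ (hasDerivAt_tLossPotential hm t x).continuousAt
  refine sub_lt_sub_of_strictMonoOn_of_strictAntiOn (by linarith) ?_ ?_ ?_ hab hne
  · refine strictMonoOn_of_deriv_pos (convex_Iic _) hcont.continuousOn fun x hx ↦ ?_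
    rw [interior_Iic] at hx
    rw [hderiv, sub_pos]
    exact tPdf_lt_tPdf_of_sq_lt hm (by nlinarith [hx.out])
  · refine strictAntiOn_of_deriv_neg (convex_Icc _ _) hcont.continuousOn fun x hx ↦ ?_
    rw [interior_Icc] at hx
    rw [hderiv, sub_neg]
    exact tPdf_lt_tPdf_of_sq_lt hm (by nlinarith [hx.1, hx.2])
  · refine strictMonoOn_of_deriv_pos (convex_Ici _) hcont.continuousOn fun x hx ↦ ?_
    rw [interior_Ici] at hx
    rw [hderiv, sub_pos]
    exact tPdf_lt_tPdf_of_sq_lt hm (by nlinarith [hx.out])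

end

theorem stmt12_general (n : ℕ) (hn : 2 ≤ n) (xbar : ℝ) (s : ℝ) (hs : 0 < s)
    (t : ℝ) (ht : 0 < t)
    (c₁ k : ℝ)
    (hc₁ : c₁ = (Real.Gamma ((n : ℝ) / 2) / Real.Gamma (((n : ℝ) - 1) / 2)) *
      Real.sqrt (2 / ((n : ℝ) - 1)))
    (hk : k = c₁ / (Real.sqrt n * tPdf (n - 1) t))
    (Λ : ℝ → ℝ → ℝ)
    (hΛ : ∀ l u : ℝ, Λ l u = c₁ * (u - l) / s -
      k * (tCdf (n - 1) (Real.sqrt n * (u - xbar) / s) -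
           tCdf (n - 1) (Real.sqrt n * (l - xbar) / s)))
    (l u : ℝ) (hlu : l ≤ u)
    (hne : (l, u) ≠ (xbar - t * s / Real.sqrt n, xbar + t * s / Real.sqrt n)) :
    Λ (xbar - t * s / Real.sqrt n) (xbar + t * s / Real.sqrt n) < Λ l u := by
  have hm : 0 < n - 1 := by omega
  have hn' : (2 : ℝ) ≤ n := by exact_mod_cast hn
  have hsqrt : 0 < Real.sqrt n := Real.sqrt_pos.2 (by linarith)
  have hc₁_pos : 0 < c₁ := by
    have := Real.Gamma_pos_of_pos (by linarith : (0 : ℝ) < (n : ℝ) / 2)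
    have := Real.Gamma_pos_of_pos (by linarith : (0 : ℝ) < ((n : ℝ) - 1) / 2)
    have := Real.sqrt_pos.2 (by rw [div_pos_iff_of_pos_left two_pos]; linarith :
      (0 : ℝ) < 2 / ((n : ℝ) - 1))
    rw [hc₁]
    positivity
  have hf := tPdf_pos hm t
  have hk_pos : 0 < k := hk ▸ by positivity
  set z : ℝ → ℝ := fun x ↦ Real.sqrt n * (x - xbar) / s with hz
  have hz_mono : StrictMono z := fun x y hxy ↦ by simp only [hz]; gcongr
  have hΛ_eq : ∀ l u, Λ l u =
      k * (tLossPotential (n - 1) t (z u) - tLossPotential (n - 1) t (z l)) := by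
    intro l u
    simp only [hΛ, hk, tLossPotential, hz]
    field_simp
    ring
  have hz_left : z (xbar - t * s / Real.sqrt n) = -t := by simp only [hz]; field_simp; ring
  have hz_right : z (xbar + t * s / Real.sqrt n) = t := by simp only [hz]; field_simp; ring
  have hne' : (z l, z u) ≠ (-t, t) := by
    intro h
    obtain ⟨hl, hu⟩ := Prod.ext_iff.1 h
    exact hne (by rw [hz_mono.injective (hl.trans hz_left.symm),
      hz_mono.injective (hu.trans hz_right.symm)])
  rw [hΛ_eq, hΛ_eq, hz_left, hz_right]
  exact mul_lt_mul_of_pos_left (tLossPotential_sub_lt hm ht (hz_mono.monotone hlu) hne') hk_pos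

/-- Under the hypotheses of STATEMENT 11, the minimizer of the posterior
expected loss `Λ` over `{ℓ ≤ u}` is unique: for all `ℓ ≤ u` with
`(ℓ, u) ≠ (x̄ - t s/√n, x̄ + t s/√n)`, `Λ(ℓ, u) > Λ(x̄ - t s/√n, x̄ + t s/√n)`. -/
theorem stmt12 (n : ℕ) (hn : 2 ≤ n) (xbar : ℝ) (s : ℝ) (hs : 0 < s)
    (α : ℝ) (hα0 : 0 < α) (hα1 : α < 1)
    (t : ℝ) (ht : 0 < t) (htα : tCdf (n - 1) t - tCdf (n - 1) (-t) = 1 - α)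
    (c₁ k : ℝ)
    (hc₁ : c₁ = (Real.Gamma ((n : ℝ) / 2) / Real.Gamma (((n : ℝ) - 1) / 2)) *
      Real.sqrt (2 / ((n : ℝ) - 1)))
    (hk : k = c₁ / (Real.sqrt n * tPdf (n - 1) t))
    (Λ : ℝ → ℝ → ℝ)
    (hΛ : ∀ l u : ℝ, Λ l u = c₁ * (u - l) / s -
      k * (tCdf (n - 1) (Real.sqrt n * (u - xbar) / s) -
           tCdf (n - 1) (Real.sqrt n * (l - xbar) / s)))
    (l u : ℝ) (hlu : l ≤ u)
    (hne : (l, u) ≠ (xbar - t * s / Real.sqrt n, xbar + t * s / Real.sqrt n)) :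
    Λ (xbar - t * s / Real.sqrt n) (xbar + t * s / Real.sqrt n) < Λ l u :=
  stmt12_general n hn xbar s hs t ht c₁ k hc₁ hk Λ hΛ l u hlu hne
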